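/- (Chen–Albeverio–Fei bound, realignment part.) Let ρ be a density matrix on ℂ^m⊗ℂ^m and let R(ρ) denote the realigned matrix, (R(ρ))_{(i,j),(k,l)} = ρ_{(i,k),(j,l)}. Then for every pure-state decomposition ρ = Σ_i p_i |ψ_i⟩⟨ψ_i| (p_i > 0, Σ_i p_i = 1, ψ_i unit vectors), one has Σ_i p_i C(ψ_i) ≥ √(2/(m(m−1))) · (‖R(ρ)‖₁ − 1); consequently C(ρ) ≥ √(2/(m(m−1))) · (‖R(ρ)‖₁ − 1). -/

import Mathlib

open scoped BigOperators ComplexConjugate ComplexOrder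
open Finset Matrix

noncomputable section

/-- Tensor product `a⊗b` of two vectors, `(a⊗b)(x,y) = aₓ·b_y`. -/
def tp {m n : ℕ} (a : Fin m → ℂ) (b : Fin n → ℂ) : Fin m × Fin n → ℂ :=
  fun p => a p.1 * b p.2

/-- The standard Hermitian inner product `⟨f,g⟩ = ∑ i, conj (f i) * g i`. -/
def hip {ι : Type} [Fintype ι] (f g : ι → ℂ) : ℂ := ∑ i, conj (f i) * g i

/-- An orthonormal family of vectors. -/
def Onb {m r : ℕ} (a : Fin r → Fin m → ℂ) : Prop :=
  ∀ i j, hip (a i) (a j) = if i = j then 1 else 0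

/-- `IsSchmidt ψ a b μ` : `ψ = ∑ i, √μᵢ aᵢ⊗bᵢ` is a Schmidt decomposition of `ψ`. -/
def IsSchmidt {m : ℕ} (ψ : Fin m × Fin m → ℂ)
    (a b : Fin m → Fin m → ℂ) (μ : Fin m → ℝ) : Prop :=
  Onb a ∧ Onb b ∧ (∀ i, 0 ≤ μ i) ∧ ∑ i, μ i = 1 ∧
  ψ = fun p => ∑ i, (Real.sqrt (μ i) : ℂ) * tp (a i) (b i) p

/-- `A_{kl}^{(W)}(ψ) = Re⟨a_k⊗b_k, W(a_l⊗b_l)⟩`. -/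
def Acoef {m : ℕ} (W : Matrix (Fin m × Fin m) (Fin m × Fin m) ℂ)
    (a b : Fin m → Fin m → ℂ) (k l : Fin m) : ℝ :=
  (hip (tp (a k) (b k)) (W.mulVec (tp (a l) (b l)))).re

/-- Block positivity: `⟨a⊗b, W(a⊗b)⟩ ≥ 0` for all `a`, `b`. -/
def BlockPos {m : ℕ} (W : Matrix (Fin m × Fin m) (Fin m × Fin m) ℂ) : Prop :=
  ∀ a b : Fin m → ℂ, 0 ≤ (hip (tp a b) (W.mulVec (tp a b))).re

/-- The reduced matrix `ρ_A` of a vector `ψ`. -/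
def rhoA {m n : ℕ} (ψ : Fin m × Fin n → ℂ) : Matrix (Fin m) (Fin m) ℂ :=
  Matrix.of fun x y => ∑ z, ψ (x, z) * conj (ψ (y, z))

/-- Concurrence of a pure state: `C(ψ) = √(2(1 − Tr ρ_A²))`. -/
def concP {m n : ℕ} (ψ : Fin m × Fin n → ℂ) : ℝ :=
  Real.sqrt (2 * (1 - (Matrix.trace (rhoA ψ * rhoA ψ)).re))

/-- Convex-roof concurrence of a mixed state. -/
def concM {m n : ℕ} (ρ : Matrix (Fin m × Fin n) (Fin m × Fin n) ℂ) : ℝ :=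
  sInf { c : ℝ | ∃ (N : ℕ) (p : Fin N → ℝ) (ψ : Fin N → (Fin m × Fin n → ℂ)),
    (∀ i, 0 < p i) ∧ ∑ i, p i = 1 ∧ (∀ i, hip (ψ i) (ψ i) = 1) ∧
    ρ = ∑ i, (p i : ℂ) • Matrix.of (fun x y => ψ i x * conj (ψ i y)) ∧
    c = ∑ i, p i * concP (ψ i) }


/-- The trace norm `‖X‖₁ = Tr√(X†X)`, the sum of the singular values of `X`. -/
def traceNorm {ι : Type} [Fintype ι] [DecidableEq ι] (X : Matrix ι ι ℂ) : ℝ :=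
  (Matrix.trace ((Matrix.posSemidef_conjTranspose_mul_self X).1.eigenvectorUnitary.1 *
    Matrix.diagonal ((fun r : ℝ => (r : ℂ)) ∘ (Real.sqrt ·) ∘ (Matrix.posSemidef_conjTranspose_mul_self X).1.eigenvalues) *
    (star (Matrix.posSemidef_conjTranspose_mul_self X).1.eigenvectorUnitary : Matrix ι ι ℂ))).re

/-- The realignment `(R(ρ))_{(i,j),(k,l)} = ρ_{(i,k),(j,l)}`. -/
def realign {m : ℕ} (ρ : Matrix (Fin m × Fin m) (Fin m × Fin m) ℂ) :
    Matrix (Fin m × Fin m) (Fin m × Fin m) ℂ :=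
  Matrix.of fun p q => ρ (p.1, q.1) (p.2, q.2)

/-!
For a pure state `ψ` with coefficient matrix `M` (`ψ = ∑ M i j · eᵢ ⊗ eⱼ`), the realignment of
`|ψ⟩⟨ψ|` is `M ⊗ M̄`, so its trace norm is `‖M‖₁² = (∑ᵢ √μᵢ)²`, where the `μᵢ` are the eigenvalues
of `MᴴM` (the squared Schmidt coefficients, `∑ μᵢ = 1`), while `C(ψ)² = 2(1 - ∑ μᵢ²)`. Expanding
the square, `(∑ √μᵢ)² - 1 = ∑_{i ≠ j} √(μᵢ μⱼ)`, and Cauchy–Schwarz over the `m(m-1)` off-diagonal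
pairs bounds this by `√(m(m-1)/2) · C(ψ)`. The mixed case follows from convexity of the trace norm
(proved through the polar decomposition `X = W |X|`) and linearity of the realignment.
-/

open scoped MatrixOrder Kronecker

namespace Matrix

theorem IsHermitian.trace_cfc {𝕜 ι : Type*} [RCLike 𝕜] [Fintype ι] [DecidableEq ι]
    {A : Matrix ι ι 𝕜} (hA : A.IsHermitian) (f : ℝ → ℝ) :
    (cfc f A).trace = ∑ i, (f (hA.eigenvalues i) : 𝕜) := by
  rw [hA.cfc_eq, IsHermitian.cfc, Unitary.conjStarAlgAut_apply, trace_mul_cycle,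
    Unitary.coe_star_mul_self, Matrix.one_mul, trace_diagonal]
  rfl

variable {ι κ : Type} [Fintype ι] [DecidableEq ι] [Fintype κ] [DecidableEq κ]

theorem abs_eq_cfc_sqrt (X : Matrix ι ι ℂ) : CFC.abs X = cfc Real.sqrt (Xᴴ * X) := by
  rw [CFC.abs, star_eq_conjTranspose,
    CFC.sqrt_eq_real_sqrt _ (posSemidef_conjTranspose_mul_self X).nonneg, cfcₙ_eq_cfc]

theorem mul_cfc_conjTranspose_mul_self_eq_zero (X : Matrix ι ι ℂ) {f : ℝ → ℝ}
    (hf : ∀ t, 0 < t → f t = 0) : X * cfc f (Xᴴ * X) = 0 := by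
  have hH : 0 ≤ Xᴴ * X := (posSemidef_conjTranspose_mul_self X).nonneg
  have hcont (g : ℝ → ℝ) : ContinuousOn g (spectrum ℝ (Xᴴ * X)) :=
    finite_real_spectrum.continuousOn g
  have hD : (cfc f (Xᴴ * X))ᴴ = cfc f (Xᴴ * X) := (cfc_predicate f (Xᴴ * X)).star_eq
  rw [← conjTranspose_mul_self_eq_zero, conjTranspose_mul, hD, Matrix.mul_assoc,
    ← Matrix.mul_assoc Xᴴ]
  conv_lhs => enter [2, 1]; rw [← cfc_id' ℝ (Xᴴ * X)]
  rw [← cfc_mul _ _ _ (hcont _) (hcont _), ← cfc_mul _ _ _ (hcont _) (hcont _)]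
  refine (cfc_congr fun t ht => ?_).trans (cfc_const_zero ℝ _)
  rcases (spectrum_nonneg_of_nonneg hH ht).eq_or_lt with h | h
  · simp [← h]
  · simp [hf t h]

theorem exists_polar_decomposition (X : Matrix ι ι ℂ) :
    ∃ W : Matrix ι ι ℂ, Wᴴ * W ≤ 1 ∧ X = W * CFC.abs X ∧ Wᴴ * X = CFC.abs X := by
  set H := Xᴴ * X with hHdef
  have hH : 0 ≤ H := (posSemidef_conjTranspose_mul_self X).nonneg
  have hcont (f : ℝ → ℝ) : ContinuousOn f (spectrum ℝ H) := finite_real_spectrum.continuousOn f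
  -- `Q` inverts `|X|` on its range; `0⁻¹ = 0` makes it vanish on the kernel.
  set Q := cfc (fun t => (√t)⁻¹) H
  have hQ : Qᴴ = Q := (cfc_predicate (fun t => (√t)⁻¹) H : IsSelfAdjoint Q).star_eq
  have hQH : Q * H = CFC.abs X := by
    rw [abs_eq_cfc_sqrt, ← hHdef]
    conv_lhs => rw [← cfc_id' ℝ H]
    rw [← cfc_mul _ _ _ (hcont _) (hcont _)]
    congr 1; funext t
    rw [← div_eq_inv_mul, Real.div_sqrt]
  have hQabs : Q * CFC.abs X = 1 - cfc (fun t => 1 - (√t)⁻¹ * √t) H := by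
    rw [cfc_sub _ _ _ (hcont _) (hcont _), cfc_const_one ℝ H, sub_sub_cancel, abs_eq_cfc_sqrt,
      ← hHdef, cfc_mul _ _ _ (hcont _) (hcont _)]
  refine ⟨X * Q, ?_, ?_, ?_⟩
  · rw [conjTranspose_mul, hQ, Matrix.mul_assoc, ← Matrix.mul_assoc Xᴴ, ← hHdef,
      ← Matrix.mul_assoc, hQH, abs_eq_cfc_sqrt, ← cfc_mul _ _ _ (hcont _) (hcont _)]
    refine cfc_le_one _ _ fun t _ => ?_
    rcases eq_or_ne (√t) 0 with h | h
    · simp [h]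
    · rw [mul_inv_cancel₀ h]
  · have hker := mul_cfc_conjTranspose_mul_self_eq_zero X (f := fun t => 1 - (√t)⁻¹ * √t)
      fun t ht => by rw [inv_mul_cancel₀ (Real.sqrt_pos.mpr ht).ne', sub_self]
    rw [Matrix.mul_assoc, hQabs, Matrix.mul_sub, hker, Matrix.mul_one, sub_zero]
  · rw [conjTranspose_mul, hQ, Matrix.mul_assoc, ← hHdef, ← hQH]

theorem re_trace_mul_le_of_le {Q R P : Matrix ι ι ℂ} (hQR : Q ≤ R) (hP : 0 ≤ P) :
    (Q * P).trace.re ≤ (R * P).trace.re := by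
  set S := CFC.sqrt P
  have hS : star S = S := (CFC.sqrt_nonneg P).isSelfAdjoint.star_eq
  have hconj (T : Matrix ι ι ℂ) : (T * P).trace = (star S * T * S).trace := by
    rw [hS, ← CFC.sqrt_mul_sqrt_self P, ← Matrix.mul_assoc, trace_mul_cycle]
  have h : (0 : ℂ) ≤ (star S * R * S - star S * Q * S).trace :=
    (sub_nonneg.mpr (star_left_conjugate_le_conjugate hQR S)).posSemidef.trace_nonneg
  rw [trace_sub, ← hconj, ← hconj, sub_nonneg] at h
  exact (Complex.le_def.mp h).1

theorem re_trace_conjTranspose_mul_mul_le {A B P : Matrix ι ι ℂ} (hA : Aᴴ * A ≤ 1)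
    (hB : Bᴴ * B ≤ 1) (hP : 0 ≤ P) : (Bᴴ * A * P).trace.re ≤ P.trace.re := by
  -- `0 ≤ (A - B)ᴴ (A - B)` is the matrix form of `2 Re ⟨b, a⟩ ≤ ‖a‖² + ‖b‖²`.
  have hcross : Aᴴ * B + Bᴴ * A ≤ 1 + 1 := by
    have h := star_mul_self_nonneg (A - B)
    have hexpand : star (A - B) * (A - B) = Aᴴ * A + Bᴴ * B - (Aᴴ * B + Bᴴ * A) := by
      simp only [star_sub, star_eq_conjTranspose, sub_mul, mul_sub]; abel
    rw [hexpand, sub_nonneg] at h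
    exact h.trans (add_le_add hA hB)
  have hswap : (Aᴴ * B * P).trace.re = (Bᴴ * A * P).trace.re := by
    calc (Aᴴ * B * P).trace.re = (star (Aᴴ * B * P).trace).re := (Complex.conj_re _).symm
      _ = (P * (Bᴴ * A)).trace.re := by
        rw [← trace_conjTranspose, conjTranspose_mul, conjTranspose_mul,
          conjTranspose_conjTranspose, hP.posSemidef.1.eq]
      _ = (Bᴴ * A * P).trace.re := by rw [trace_mul_comm]
  have h := re_trace_mul_le_of_le hcross hP
  simp only [add_mul, Matrix.one_mul, trace_add, Complex.add_re] at h
  linarith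

theorem abs_kronecker (A : Matrix ι ι ℂ) (B : Matrix κ κ ℂ) :
    CFC.abs (A ⊗ₖ B) = CFC.abs A ⊗ₖ CFC.abs B := by
  rw [CFC.abs, CFC.sqrt_eq_iff _ _ (star_mul_self_nonneg _)
    ((CFC.abs_nonneg A).posSemidef.kronecker (CFC.abs_nonneg B).posSemidef).nonneg,
    ← mul_kronecker_mul, CFC.abs_mul_abs, CFC.abs_mul_abs]
  simp only [star_eq_conjTranspose, conjTranspose_kronecker, mul_kronecker_mul]

theorem abs_map_conj (M : Matrix ι ι ℂ) : CFC.abs (M.map conj) = (CFC.abs M)ᵀ := by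
  rw [CFC.abs, CFC.sqrt_eq_iff _ _ (star_mul_self_nonneg _)
    (CFC.abs_nonneg M).posSemidef.transpose.nonneg, ← transpose_mul, CFC.abs_mul_abs]
  ext i j
  simp [mul_apply, mul_comm]

end Matrix

section TraceNorm

variable {ι κ : Type} [Fintype ι] [DecidableEq ι] [Fintype κ] [DecidableEq κ]

theorem traceNorm_eq_re_trace_abs (X : Matrix ι ι ℂ) : traceNorm X = (CFC.abs X).trace.re := by
  rw [abs_eq_cfc_sqrt, (posSemidef_conjTranspose_mul_self X).1.cfc_eq]
  rfl

theorem trace_abs_eq_traceNorm (X : Matrix ι ι ℂ) : (CFC.abs X).trace = traceNorm X := by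
  have h : (0 : ℂ) ≤ (CFC.abs X).trace := (CFC.abs_nonneg X).posSemidef.trace_nonneg
  rw [traceNorm_eq_re_trace_abs]
  exact Complex.eq_re_of_ofReal_le (by exact_mod_cast h)

theorem traceNorm_eq_sum_sqrt_eigenvalues (X : Matrix ι ι ℂ) :
    traceNorm X = ∑ i, √((posSemidef_conjTranspose_mul_self X).1.eigenvalues i) := by
  have h := trace_abs_eq_traceNorm X
  rw [abs_eq_cfc_sqrt, (posSemidef_conjTranspose_mul_self X).1.trace_cfc] at h
  apply Complex.ofReal_injective
  rw [← h, Complex.ofReal_sum]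
  rfl

theorem re_trace_conjTranspose_mul_le_traceNorm {B : Matrix ι ι ℂ} (hB : Bᴴ * B ≤ 1)
    (X : Matrix ι ι ℂ) : (Bᴴ * X).trace.re ≤ traceNorm X := by
  obtain ⟨V, hV, hX, -⟩ := exists_polar_decomposition X
  calc (Bᴴ * X).trace.re = (Bᴴ * V * CFC.abs X).trace.re := by rw [Matrix.mul_assoc, ← hX]
    _ ≤ (CFC.abs X).trace.re := re_trace_conjTranspose_mul_mul_le hV hB (CFC.abs_nonneg X)
    _ = traceNorm X := (traceNorm_eq_re_trace_abs X).symm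

theorem traceNorm_sum_smul_le {α : Type*} (s : Finset α) (p : α → ℝ) (hp : ∀ i ∈ s, 0 ≤ p i)
    (X : α → Matrix ι ι ℂ) :
    traceNorm (∑ i ∈ s, (p i : ℂ) • X i) ≤ ∑ i ∈ s, p i * traceNorm (X i) := by
  obtain ⟨W, hW, -, hWX⟩ := exists_polar_decomposition (∑ i ∈ s, (p i : ℂ) • X i)
  rw [traceNorm_eq_re_trace_abs, ← hWX, Matrix.mul_sum, trace_sum, Complex.re_sum]
  refine Finset.sum_le_sum fun i hi => ?_
  rw [Matrix.mul_smul, trace_smul, smul_eq_mul, Complex.re_ofReal_mul]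
  exact mul_le_mul_of_nonneg_left (re_trace_conjTranspose_mul_le_traceNorm hW (X i)) (hp i hi)

theorem traceNorm_kronecker (A : Matrix ι ι ℂ) (B : Matrix κ κ ℂ) :
    traceNorm (A ⊗ₖ B) = traceNorm A * traceNorm B := by
  have h := trace_abs_eq_traceNorm (A ⊗ₖ B)
  rw [abs_kronecker, trace_kronecker, trace_abs_eq_traceNorm, trace_abs_eq_traceNorm] at h
  exact_mod_cast h.symm

theorem traceNorm_map_conj (M : Matrix ι ι ℂ) : traceNorm (M.map conj) = traceNorm M := by
  rw [traceNorm_eq_re_trace_abs, abs_map_conj, trace_transpose, traceNorm_eq_re_trace_abs]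

end TraceNorm

theorem Finset.sq_sum_eq_sum_sq_add_sum_offDiag {ι R : Type*} [CommSemiring R] [DecidableEq ι]
    (s : Finset ι) (f : ι → R) :
    (∑ i ∈ s, f i) ^ 2 = ∑ i ∈ s, f i ^ 2 + ∑ p ∈ s.offDiag, f p.1 * f p.2 := by
  rw [sq, sum_mul_sum, ← sum_product', ← diag_union_offDiag, sum_union (disjoint_diag_offDiag s),
    sum_diag]
  simp only [sq]

theorem Finset.cast_card_univ_offDiag {ι : Type*} [Fintype ι] [DecidableEq ι] :
    ((univ : Finset ι).offDiag.card : ℝ) = Fintype.card ι * (Fintype.card ι - 1) := by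
  rw [offDiag_card, card_univ, Nat.cast_sub (Nat.le_mul_self _)]
  push_cast
  ring

theorem sqrt_two_div_mul_sq_sum_sub_one_le {ι : Type*} [Fintype ι] (x : ι → ℝ)
    (hx : ∑ i, x i ^ 2 = 1) :
    √(2 / (Fintype.card ι * (Fintype.card ι - 1))) * ((∑ i, x i) ^ 2 - 1)
      ≤ √(2 * (1 - ∑ i, x i ^ 4)) := by
  classical
  set k : ℝ := Fintype.card ι * (Fintype.card ι - 1)
  have hk : k = (univ : Finset ι).offDiag.card := Finset.cast_card_univ_offDiag.symm
  set T := ∑ p ∈ univ.offDiag, x p.1 * x p.2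
  have hT : (∑ i, x i) ^ 2 - 1 = T := by
    rw [Finset.sq_sum_eq_sum_sq_add_sum_offDiag, hx]; ring
  have hs : 1 - ∑ i, x i ^ 4 = ∑ p ∈ univ.offDiag, (x p.1 * x p.2) ^ 2 := by
    have h := Finset.sq_sum_eq_sum_sq_add_sum_offDiag univ (fun i => x i ^ 2)
    simp only [hx, ← pow_mul, ← mul_pow] at h
    linarith
  have hs0 : 0 ≤ 1 - ∑ i, x i ^ 4 := hs ▸ sum_nonneg fun p _ => sq_nonneg _
  have hCS : T ≤ √(k * (1 - ∑ i, x i ^ 4)) := by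
    refine (le_abs_self T).trans (Real.abs_le_sqrt ?_)
    rw [hs, hk]
    exact sq_sum_le_card_mul_sum_sq
  have hk2 : 2 / k * k ≤ 2 := by
    rcases eq_or_ne k 0 with h | h
    · simp [h]
    · rw [div_mul_cancel₀ _ h]
  rw [hT]
  calc √(2 / k) * T ≤ √(2 / k) * √(k * (1 - ∑ i, x i ^ 4)) := by gcongr
    _ = √(2 / k * k * (1 - ∑ i, x i ^ 4)) := by
      rw [← Real.sqrt_mul (div_nonneg zero_le_two (hk ▸ Nat.cast_nonneg _)), mul_assoc (2 / k) k]
    _ ≤ √(2 * (1 - ∑ i, x i ^ 4)) := by gcongr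

section PureState

variable {m n : ℕ}

def coeffMatrix (ψ : Fin m × Fin n → ℂ) : Matrix (Fin m) (Fin n) ℂ :=
  Matrix.of fun i j => ψ (i, j)

theorem rhoA_eq_coeffMatrix_mul (ψ : Fin m × Fin n → ℂ) :
    rhoA ψ = coeffMatrix ψ * (coeffMatrix ψ)ᴴ := by
  ext x y
  simp [rhoA, coeffMatrix, mul_apply]

theorem trace_conjTranspose_mul_coeffMatrix (ψ : Fin m × Fin n → ℂ) :
    ((coeffMatrix ψ)ᴴ * coeffMatrix ψ).trace = hip ψ ψ := by
  simp only [Matrix.trace, Matrix.diag, mul_apply, conjTranspose_apply, coeffMatrix, of_apply,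
    hip, Fintype.sum_prod_type, RCLike.star_def]
  exact Finset.sum_comm

theorem realign_pure (ψ : Fin m × Fin m → ℂ) :
    realign (Matrix.of fun x y => ψ x * conj (ψ y))
      = coeffMatrix ψ ⊗ₖ (coeffMatrix ψ).map conj := by
  ext p q
  simp [realign, coeffMatrix]

theorem sqrt_two_div_mul_traceNorm_realign_sub_one_le_concP (ψ : Fin m × Fin m → ℂ)
    (hψ : hip ψ ψ = 1) :
    √(2 / ((m : ℝ) * ((m : ℝ) - 1)))
        * (traceNorm (realign (Matrix.of fun x y => ψ x * conj (ψ y))) - 1)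
      ≤ concP ψ := by
  set M := coeffMatrix ψ
  have hH := (posSemidef_conjTranspose_mul_self M).1
  set μ := hH.eigenvalues
  have hμ (i) : 0 ≤ μ i := (posSemidef_conjTranspose_mul_self M).eigenvalues_nonneg i
  have hsum : ∑ i, μ i = 1 := by
    have h := hH.trace_eq_sum_eigenvalues
    rw [trace_conjTranspose_mul_coeffMatrix, hψ] at h
    apply Complex.ofReal_injective
    rw [Complex.ofReal_sum]
    exact h.symm
  have hsumsq : (rhoA ψ * rhoA ψ).trace.re = ∑ i, μ i ^ 2 := by
    have hcyc : (rhoA ψ * rhoA ψ).trace = ((Mᴴ * M) ^ 2).trace := by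
      rw [rhoA_eq_coeffMatrix_mul, sq, Matrix.mul_assoc, trace_mul_comm]
      simp only [Matrix.mul_assoc]
      rfl
    rw [hcyc, ← cfc_pow_id (R := ℝ) (Mᴴ * M) 2 hH.isSelfAdjoint, hH.trace_cfc,
      ← RCLike.ofReal_sum (K := ℂ)]
    exact RCLike.ofReal_re (K := ℂ) _
  have key := sqrt_two_div_mul_sq_sum_sub_one_le (fun i => √(μ i))
    (by simpa [Real.sq_sqrt (hμ _)])
  simp only [Fintype.card_fin] at key
  convert key using 3
  · rw [realign_pure, traceNorm_kronecker, traceNorm_map_conj,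
      traceNorm_eq_sum_sqrt_eigenvalues, sq]
  · rw [concP, hsumsq]
    congr 3
    refine Finset.sum_congr rfl fun i _ => ?_
    rw [show 4 = 2 * 2 from rfl, pow_mul, Real.sq_sqrt (hμ i)]

end PureState

theorem realign_sum_smul {m : ℕ} {α : Type*} (s : Finset α) (p : α → ℂ)
    (A : α → Matrix (Fin m × Fin m) (Fin m × Fin m) ℂ) :
    realign (∑ i ∈ s, p i • A i) = ∑ i ∈ s, p i • realign (A i) := by
  ext x y
  simp [realign, Matrix.sum_apply]

theorem Fintype.sum_equivFin_subtype_ne_zero {ι M : Type*} [Fintype ι] [AddCommMonoid M]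
    (w : ι → ℝ) (f : ι → M) (hf : ∀ k, w k = 0 → f k = 0) :
    ∑ i, f ((Fintype.equivFin {k // w k ≠ 0}).symm i) = ∑ k, f k := by
  classical
  rw [Equiv.sum_comp (Fintype.equivFin {k // w k ≠ 0}).symm (fun k => f k),
    ← Finset.sum_subtype (univ.filter fun k => w k ≠ 0) (by simp)]
  exact Finset.sum_filter_of_ne fun k _ hk hw => hk (hf k hw)

theorem exists_pure_decomposition {ι : Type} [Fintype ι] [DecidableEq ι]
    (ρ : Matrix ι ι ℂ) (hρ : ρ.PosSemidef) (hρtr : ρ.trace = 1) :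
    ∃ (N : ℕ) (p : Fin N → ℝ) (ψ : Fin N → ι → ℂ),
      (∀ i, 0 < p i) ∧ ∑ i, p i = 1 ∧ (∀ i, hip (ψ i) (ψ i) = 1) ∧
      ρ = ∑ i, (p i : ℂ) • Matrix.of (fun x y => ψ i x * conj (ψ i y)) := by
  set μ := hρ.1.eigenvalues
  set U : Matrix ι ι ℂ := ↑hρ.1.eigenvectorUnitary
  have hμ (k) : 0 ≤ μ k := hρ.eigenvalues_nonneg k
  have hμ1 : ∑ k, μ k = 1 := by
    have h := hρ.1.trace_eq_sum_eigenvalues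
    rw [hρtr] at h
    apply Complex.ofReal_injective
    rw [Complex.ofReal_sum]
    exact h.symm
  have hU (k) : hip (fun x => U x k) (fun x => U x k) = 1 := by
    have h := congrFun (congrFun (Unitary.coe_star_mul_self hρ.1.eigenvectorUnitary) k) k
    simpa [mul_apply, hip, U] using h
  have hspec : ρ = ∑ k, (μ k : ℂ) • Matrix.of (fun x y => U x k * conj (U y k)) := by
    conv_lhs => rw [hρ.1.spectral_theorem, Unitary.conjStarAlgAut_apply]
    ext x y
    rw [mul_apply, Matrix.sum_apply]
    refine Finset.sum_congr rfl fun k _ => ?_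
    simp only [mul_diagonal, Matrix.smul_apply, of_apply, star_apply, smul_eq_mul,
      Function.comp_apply, RCLike.star_def]
    rw [mul_right_comm, mul_comm]
    rfl
  clear_value μ U
  -- the weights must be positive, so the zero eigenvalues are dropped
  refine ⟨_, fun i => μ ((Fintype.equivFin {k // μ k ≠ 0}).symm i),
    fun i x => U x ((Fintype.equivFin {k // μ k ≠ 0}).symm i), fun i => ?_, ?_, fun i => hU _, ?_⟩
  · exact (hμ _).lt_of_ne ((Fintype.equivFin {k // μ k ≠ 0}).symm i).2.symm
  · rw [Fintype.sum_equivFin_subtype_ne_zero μ μ fun _ h => h, hμ1]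
  · rw [Fintype.sum_equivFin_subtype_ne_zero μ
      (fun k => (μ k : ℂ) • Matrix.of (fun x y => U x k * conj (U y k))) fun k h => by simp [h]]
    exact hspec

theorem sqrt_two_div_mul_traceNorm_realign_sub_one_le_sum_concP {m N : ℕ} (p : Fin N → ℝ)
    (ψ : Fin N → Fin m × Fin m → ℂ) (hp : ∀ i, 0 ≤ p i) (hp1 : ∑ i, p i = 1)
    (hψ : ∀ i, hip (ψ i) (ψ i) = 1) :
    √(2 / ((m : ℝ) * ((m : ℝ) - 1)))
        * (traceNorm (realign (∑ i, (p i : ℂ) • Matrix.of fun x y => ψ i x * conj (ψ i y))) - 1)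
      ≤ ∑ i, p i * concP (ψ i) := by
  set c := √(2 / ((m : ℝ) * ((m : ℝ) - 1)))
  set T := fun i => traceNorm (realign (Matrix.of fun x y => ψ i x * conj (ψ i y)))
  have hconv : traceNorm (realign (∑ i, (p i : ℂ) • Matrix.of fun x y => ψ i x * conj (ψ i y)))
      ≤ ∑ i, p i * T i := by
    rw [realign_sum_smul]
    exact traceNorm_sum_smul_le univ p (fun i _ => hp i) _
  calc _ ≤ c * (∑ i, p i * T i - ∑ i, p i) := by rw [hp1]; gcongr
    _ = ∑ i, p i * (c * (T i - 1)) := by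
      rw [← Finset.sum_sub_distrib, Finset.mul_sum]
      exact Finset.sum_congr rfl fun i _ => by ring
    _ ≤ ∑ i, p i * concP (ψ i) := Finset.sum_le_sum fun i _ =>
      mul_le_mul_of_nonneg_left
        (sqrt_two_div_mul_traceNorm_realign_sub_one_le_concP (ψ i) (hψ i)) (hp i)

/-- Chen–Albeverio–Fei bound, realignment part: for a density matrix `ρ` on
`ℂ^m⊗ℂ^m`, every pure-state decomposition satisfies
`∑ᵢ pᵢ C(ψᵢ) ≥ √(2/(m(m−1))) (‖R(ρ)‖₁ − 1)`, and hence
`C(ρ) ≥ √(2/(m(m−1))) (‖R(ρ)‖₁ − 1)`. -/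
theorem stmt10 {m : ℕ} (ρ : Matrix (Fin m × Fin m) (Fin m × Fin m) ℂ)
    (hρ : ρ.PosSemidef) (hρtr : ρ.trace = 1) :
    (∀ (N : ℕ) (p : Fin N → ℝ) (ψ : Fin N → (Fin m × Fin m → ℂ)),
      (∀ i, 0 < p i) → ∑ i, p i = 1 → (∀ i, hip (ψ i) (ψ i) = 1) →
      ρ = ∑ i, (p i : ℂ) • Matrix.of (fun x y => ψ i x * conj (ψ i y)) →
      Real.sqrt (2 / ((m : ℝ) * ((m : ℝ) - 1))) * (traceNorm (realign ρ) - 1)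
        ≤ ∑ i, p i * concP (ψ i)) ∧
    Real.sqrt (2 / ((m : ℝ) * ((m : ℝ) - 1))) * (traceNorm (realign ρ) - 1)
      ≤ concM ρ := by
  refine ⟨?_, ?_⟩
  · rintro N p ψ hp hp1 hψ rfl
    exact sqrt_two_div_mul_traceNorm_realign_sub_one_le_sum_concP p ψ (fun i => (hp i).le) hp1 hψ
  · obtain ⟨N, p, ψ, hp, hp1, hψ, hdec⟩ := exists_pure_decomposition ρ hρ hρtr
    refine le_csInf ⟨_, N, p, ψ, hp, hp1, hψ, hdec, rfl⟩ ?_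
    rintro _ ⟨N', p', ψ', hp', hp1', hψ', rfl, rfl⟩
    exact sqrt_two_div_mul_traceNorm_realign_sub_one_le_sum_concP p' ψ' (fun i => (hp' i).le)
      hp1' hψ'

end
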